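/- Let F be a finite field with char(F) ≠ 2, let d ≥ 1, and let f : F^n → F be a polynomial map of degree at most d+1 with homogeneous components g = f_{d+1} (degree d+1) and h = f_d (degree d). Let g̃ and h̃ denote the polarizations of g and h (a (d+1)-linear and a d-linear form, respectively), and for c ∈ F^n let ∂_c g̃ denote the d-linear form (v^(1),…,v^(d)) ↦ g̃(v^(1),…,v^(d), c). Then both of the following hold: (i) bias(Δ^d f) ≤ bias(g̃), and (ii) bias(Δ^d f) ≤ E_{c ∈ F^n} bias(h̃ − ∂_c g̃). -/

import Mathlib

open MvPolynomial

/-- Discrete derivative of `f : V → F` in direction `v`: `Δ_v f (x) = f (x+v) - f x`. -/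
def discDeriv {V F : Type*} [Add V] [Sub F] (v : V) (f : V → F) : V → F :=
  fun x => f (x + v) - f x

/-- Iterated discrete derivative `Δ^d_{v} f = Δ_{v (d-1)} ⋯ Δ_{v 0} f`. -/
def iterDDeriv {V F : Type*} [Add V] [Sub F] : (d : ℕ) → (Fin d → V) → (V → F) → V → F
  | 0, _, f => f
  | d + 1, v, f => discDeriv (v (Fin.last d)) (iterDDeriv d (fun i => v i.castSucc) f)

/-- Complex bias `𝔟(f)` of a function with respect to an additive character `χ`. -/
noncomputable def cbias {F α : Type*} [AddGroup F] [Fintype α] (χ : AddChar F ℂ)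
    (f : α → F) : ℂ :=
  (Fintype.card α : ℂ)⁻¹ * ∑ x, χ (f x)

/-- Bias `bias(f) = |𝔟(f)|`. -/
noncomputable def bias {F α : Type*} [AddGroup F] [Fintype α] (χ : AddChar F ℂ)
    (f : α → F) : ℝ :=
  ‖cbias χ f‖

/-- `bias(Δ^d f)`: the bias of the order-`d` discrete derivative of `f`,
averaged over the base point and all `d` directions. -/
noncomputable def biasDD {F : Type*} [AddGroup F] [Fintype F] {n : ℕ} (χ : AddChar F ℂ)
    (d : ℕ) (f : (Fin n → F) → F) : ℝ :=
  bias χ (fun p : (Fin n → F) × (Fin d → Fin n → F) => iterDDeriv d p.2 f p.1)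

/-- Formal directional derivative `∂_c f = Σ_i c_i ∂f/∂x_i`. -/
noncomputable def dirDeriv {F : Type*} [CommSemiring F] {n : ℕ} (c : Fin n → F)
    (f : MvPolynomial (Fin n) F) : MvPolynomial (Fin n) F :=
  ∑ i, MvPolynomial.C (c i) * MvPolynomial.pderiv i f

/-- A rank decomposition of length `r` for a form `g` of degree `k`:
`g = Σ_{i=1}^r a_i b_i` with `a_i, b_i` forms of positive degrees summing to `k`. -/
def HasRankDecomp {F : Type*} [CommSemiring F] {n : ℕ} (k : ℕ) (g : MvPolynomial (Fin n) F)
    (r : ℕ) : Prop :=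
  ∃ (a b : Fin r → MvPolynomial (Fin n) F) (da db : Fin r → ℕ),
    g = ∑ i, a i * b i ∧
      ∀ i, (a i).IsHomogeneous (da i) ∧ (b i).IsHomogeneous (db i) ∧
        0 < da i ∧ 0 < db i ∧ da i + db i = k

/-- The rank (Schmidt rank/strength) of a form `g` of degree `k`, as an extended natural. -/
noncomputable def formRank {F : Type*} [CommSemiring F] {n : ℕ} (k : ℕ)
    (g : MvPolynomial (Fin n) F) : ℕ∞ :=
  sInf {N : ℕ∞ | ∃ r : ℕ, N = r ∧ HasRankDecomp k g r}

/-- A `rk*`-decomposition of length `r` of a polynomial `f`: `f = Σ_{i=1}^r α_i β_i`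
with `α_i, β_i` non-constant, `deg α_i ≤ deg β_i`, `deg (α_i β_i) ≤ deg f`, and the
degree-1 factors `α_i` of the products of full degree are affinely independent
(i.e. their homogeneous linear parts are linearly independent). -/
def HasRkStarDecomp {F : Type*} [Field F] {n : ℕ} (f : MvPolynomial (Fin n) F)
    (r : ℕ) : Prop :=
  ∃ a b : Fin r → MvPolynomial (Fin n) F,
    f = ∑ i, a i * b i ∧
    (∀ i, 1 ≤ (a i).totalDegree) ∧
    (∀ i, (a i).totalDegree ≤ (b i).totalDegree) ∧
    (∀ i, (a i * b i).totalDegree ≤ f.totalDegree) ∧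
    LinearIndependent F
      (fun i : {i : Fin r // (a i).totalDegree = 1 ∧ (a i * b i).totalDegree = f.totalDegree} =>
        MvPolynomial.homogeneousComponent 1 (a i.1))

/-- The rank `rk*` of a polynomial: the least length of a `rk*`-decomposition (`⊤` if none). -/
noncomputable def rkStar {F : Type*} [Field F] {n : ℕ} (f : MvPolynomial (Fin n) F) : ℕ∞ :=
  sInf {N : ℕ∞ | ∃ r : ℕ, N = r ∧ HasRkStarDecomp f r}

/-- A polynomial in the `d` blocks of variables `Fin d × Fin n` is multilinear with respect
to the set `I` of blocks if each monomial in its support has exactly one variable from each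
block in `I` and no variables from blocks outside `I`. -/
def IsMultilinearOn {F : Type*} [CommSemiring F] {d n : ℕ} (I : Finset (Fin d))
    (T : MvPolynomial (Fin d × Fin n) F) : Prop :=
  ∀ m ∈ T.support, (∀ t, t ∈ I → ∑ j : Fin n, m (t, j) = 1) ∧
    (∀ t, t ∉ I → ∀ j, m (t, j) = 0)

/-- A partition-rank decomposition of length `r` of a `d`-linear form `T`. -/
def HasPRDecomp {F : Type*} [CommSemiring F] {d n : ℕ}
    (T : MvPolynomial (Fin d × Fin n) F) (r : ℕ) : Prop :=
  ∃ (R Q : Fin r → MvPolynomial (Fin d × Fin n) F) (I : Fin r → Finset (Fin d)),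
    T = ∑ i, R i * Q i ∧
    ∀ i, (I i).Nonempty ∧ I i ≠ Finset.univ ∧
      IsMultilinearOn (I i) (R i) ∧ IsMultilinearOn (I i)ᶜ (Q i)

/-- The partition rank of a multilinear form, as an extended natural. -/
noncomputable def partitionRank {F : Type*} [CommSemiring F] {d n : ℕ}
    (T : MvPolynomial (Fin d × Fin n) F) : ℕ∞ :=
  sInf {N : ℕ∞ | ∃ r : ℕ, N = r ∧ HasPRDecomp T r}

/-!
Only the two top homogeneous components `h = f_d`, `g = f_{d+1}` survive `d` discrete
derivatives: `Δ^d_v f (x) = h̃ (v) + Δ^d_v g (x)`, and `x ↦ Δ^d_v g (x)` is affine with linear part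
`c ↦ g̃ (v, c)`. Homogeneity gives `g (-x) = ± g x`, which forces this affine map to vanish at
`-τ_v`, `τ_v = (v₁ + ⋯ + v_d) / 2` (here `char F ≠ 2` is used), so
`Δ^d_v f (x) = h̃ (v) + g̃ (v, x + τ_v)`. Summing over `x` first, `∑_x χ (g̃ (v, x))` is `|F^n|` or
`0`, and the triangle inequality over `v` gives (i); summing over `v` first after the substitution
`c = -(x + τ_v)` gives (ii).
-/

open Finset fwdDiff

section FiniteDifferences

variable {V F : Type*}

lemma fwdDiff_mul [AddCommMonoid V] [CommRing F] (u : V) (φ ψ : V → F) :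
    Δ_[u] (φ * ψ) = Δ_[u] φ * ψ + φ * Δ_[u] ψ + Δ_[u] φ * Δ_[u] ψ := by
  ext x
  simp only [fwdDiff, Pi.add_apply, Pi.mul_apply]
  ring

section AddCommGroup

variable [AddCommMonoid V] [AddCommGroup F]

lemma iterDDeriv_succ {d : ℕ} (v : Fin (d + 1) → V) (φ : V → F) :
    iterDDeriv (d + 1) v φ = Δ_[v (Fin.last d)] (iterDDeriv d (fun i => v i.castSucc) φ) :=
  rfl

lemma iterDDeriv_snoc {d : ℕ} (v : Fin d → V) (c : V) (φ : V → F) (x : V) :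
    iterDDeriv (d + 1) (Fin.snoc v c) φ x = iterDDeriv d v φ (x + c) - iterDDeriv d v φ x := by
  simp [iterDDeriv_succ, fwdDiff]

lemma iterDDeriv_sum {ι : Type*} (s : Finset ι) (φ : ι → V → F) :
    ∀ (d : ℕ) (v : Fin d → V), iterDDeriv d v (∑ i ∈ s, φ i) = ∑ i ∈ s, iterDDeriv d v (φ i)
  | 0, _ => rfl
  | d + 1, v => by rw [iterDDeriv_succ, iterDDeriv_sum, fwdDiff_finsetSum]; rfl

lemma iterDDeriv_const_smul {R : Type*} [Monoid R] [DistribMulAction R F] (r : R) (φ : V → F) :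
    ∀ (d : ℕ) (v : Fin d → V), iterDDeriv d v (r • φ) = r • iterDDeriv d v φ
  | 0, _ => rfl
  | d + 1, v => by rw [iterDDeriv_succ, iterDDeriv_const_smul, fwdDiff_const_smul]; rfl

end AddCommGroup

lemma iterDDeriv_comp_neg [AddCommGroup V] [CommRing F] (φ : V → F) :
    ∀ (d : ℕ) (v : Fin d → V) (x : V),
      iterDDeriv d v (fun y => φ (-y)) x = (-1) ^ d * iterDDeriv d v φ (-x - ∑ i, v i)
  | 0, _, _ => by simp [iterDDeriv]
  | d + 1, v, x => by
    simp only [iterDDeriv_succ, fwdDiff, iterDDeriv_comp_neg φ d, Fin.sum_univ_castSucc]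
    rw [show -(x + v (Fin.last d)) - ∑ i : Fin d, v i.castSucc
        = -x - (∑ i : Fin d, v i.castSucc + v (Fin.last d)) by abel,
      show -x - ∑ i : Fin d, v i.castSucc
        = -x - (∑ i : Fin d, v i.castSucc + v (Fin.last d)) + v (Fin.last d) by abel]
    ring

end FiniteDifferences

section DiffDegree

variable {V F : Type*} [AddCommMonoid V]

def HasDiffDegreeLE [AddCommGroup F] : ℕ → (V → F) → Prop
  | 0, φ => ∀ u, Δ_[u] φ = 0
  | k + 1, φ => ∀ u, HasDiffDegreeLE k (Δ_[u] φ)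

namespace HasDiffDegreeLE

section AddCommGroup

variable [AddCommGroup F] {k : ℕ} {φ : V → F}

lemma const (c : F) : ∀ k, HasDiffDegreeLE k (fun _ : V => c)
  | 0 => fun u => fwdDiff_const u c
  | k + 1 => fun u => by rw [fwdDiff_const]; exact const 0 k

lemma add : ∀ {k : ℕ} {φ ψ : V → F},
    HasDiffDegreeLE k φ → HasDiffDegreeLE k ψ → HasDiffDegreeLE k (φ + ψ)
  | 0, _, _, hφ, hψ => fun u => by rw [fwdDiff_add, hφ u, hψ u, add_zero]
  | _ + 1, _, _, hφ, hψ => fun u => by rw [fwdDiff_add]; exact add (hφ u) (hψ u)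

lemma sum {ι : Type*} {s : Finset ι} {φ : ι → V → F} (h : ∀ i ∈ s, HasDiffDegreeLE k (φ i)) :
    HasDiffDegreeLE k (∑ i ∈ s, φ i) :=
  Finset.sum_induction _ _ (fun _ _ => add) (const 0 k) h

lemma const_smul {R : Type*} [Monoid R] [DistribMulAction R F] (r : R) :
    ∀ {k : ℕ} {φ : V → F}, HasDiffDegreeLE k φ → HasDiffDegreeLE k (r • φ)
  | 0, _, hφ => fun u => by rw [fwdDiff_const_smul, hφ u, smul_zero]
  | _ + 1, _, hφ => fun u => by rw [fwdDiff_const_smul]; exact const_smul r (hφ u)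

lemma mono_succ : ∀ {k : ℕ} {φ : V → F}, HasDiffDegreeLE k φ → HasDiffDegreeLE (k + 1) φ
  | 0, _, hφ => fun u => by rw [hφ u]; exact const 0 0
  | _ + 1, _, hφ => fun u => mono_succ (hφ u)

lemma mono {l : ℕ} (hφ : HasDiffDegreeLE k φ) (hkl : k ≤ l) : HasDiffDegreeLE l φ := by
  induction hkl with
  | refl => exact hφ
  | step _ ih => exact ih.mono_succ

lemma apply_eq_apply_zero (hφ : HasDiffDegreeLE 0 φ) (x : V) : φ x = φ 0 := by
  simpa [fwdDiff, sub_eq_zero] using congrFun (hφ x) 0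

lemma map_add (hφ : HasDiffDegreeLE 1 φ) (x y : V) : φ (x + y) = φ x + φ y - φ 0 := by
  have := (hφ y).apply_eq_apply_zero x
  simp only [fwdDiff, zero_add] at this
  rw [add_sub_assoc, ← this]
  abel

lemma addMonoidHom (ℓ : V →+ F) : HasDiffDegreeLE 1 ℓ := fun u => by
  have : Δ_[u] ⇑ℓ = fun _ => ℓ u := by ext x; simp [fwdDiff]
  rw [this]
  exact const _ 0

lemma iterDDeriv {j : ℕ} : ∀ {k : ℕ} {φ : V → F} (v : Fin k → V),
    HasDiffDegreeLE (k + j) φ → HasDiffDegreeLE j (_root_.iterDDeriv k v φ)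
  | 0, _, _, hφ => by rwa [zero_add] at hφ
  | k + 1, _, v, hφ => by
    rw [iterDDeriv_succ]
    exact iterDDeriv (j := j + 1) (fun i => v i.castSucc) (by rwa [← add_assoc, add_right_comm])
      (v (Fin.last k))

lemma iterDDeriv_eq_zero {j : ℕ} (hφ : HasDiffDegreeLE k φ) (hkj : k < j) (v : Fin j → V) :
    _root_.iterDDeriv j v φ = 0 := by
  obtain ⟨j, rfl⟩ : ∃ i, j = i + 1 := ⟨j - 1, by omega⟩
  rw [iterDDeriv_succ]
  exact iterDDeriv (j := 0) _ (hφ.mono (by omega)) _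

end AddCommGroup

section CommRing

variable [CommRing F] {k : ℕ} {φ : V → F}

lemma mul : ∀ {m k l : ℕ} {φ ψ : V → F}, k + l = m →
    HasDiffDegreeLE k φ → HasDiffDegreeLE l ψ → HasDiffDegreeLE m (φ * ψ)
  | m, 0, l, φ, ψ, hm, hφ, hψ => by
    have : φ * ψ = φ 0 • ψ := by ext x; simp [hφ.apply_eq_apply_zero x]
    rw [this, ← hm, zero_add]
    exact hψ.const_smul _
  | m, k, 0, φ, ψ, hm, hφ, hψ => by
    have : φ * ψ = ψ 0 • φ := by ext x; simp [hψ.apply_eq_apply_zero x, mul_comm]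
    rw [this, ← hm, add_zero]
    exact hφ.const_smul _
  | 0, k + 1, l + 1, _, _, hm, _, _ => by omega
  | m + 1, k + 1, l + 1, φ, ψ, hm, hφ, hψ => fun u => by
    rw [fwdDiff_mul]
    refine add (add (mul (by omega) (hφ u) hψ) (mul (by omega) hφ (hψ u))) ?_
    exact mul (by omega) (hφ u) (hψ u).mono_succ

lemma prod {ι : Type*} {s : Finset ι} {k : ι → ℕ} {φ : ι → V → F}
    (h : ∀ i ∈ s, HasDiffDegreeLE (k i) (φ i)) :
    HasDiffDegreeLE (∑ i ∈ s, k i) (∏ i ∈ s, φ i) := by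
  classical
  induction s using Finset.induction_on with
  | empty => exact const 1 0
  | insert i s hi ih =>
    rw [prod_insert hi, sum_insert hi]
    exact mul rfl (h i (mem_insert_self i s)) (ih fun j hj => h j (mem_insert_of_mem hj))

lemma pow (hφ : HasDiffDegreeLE k φ) : ∀ m : ℕ, HasDiffDegreeLE (m * k) (φ ^ m)
  | 0 => by rw [pow_zero, zero_mul]; exact const 1 0
  | m + 1 => by rw [pow_succ]; exact mul (by ring) (pow hφ m) hφ

end CommRing

end HasDiffDegreeLE

end DiffDegree

section Polarization

variable {V F : Type*} [AddCommGroup V] {d : ℕ} {φ : V → F}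

/-- `c ↦ Δ^{d+1}_{(v, c)} φ (0)`: for `φ` a polynomial map this is `c ↦ φ̃ (v, c)` with `φ̃` the
polarization of the top-degree component of `φ`. -/
def iterDDerivSnocHom [AddCommGroup F] (hφ : HasDiffDegreeLE (d + 1) φ) (v : Fin d → V) :
    V →+ F :=
  AddMonoidHom.mk' (fun c => iterDDeriv (d + 1) (Fin.snoc v c) φ 0) fun a b => by
    simp only [iterDDeriv_snoc, zero_add, (hφ.iterDDeriv (j := 1) v).map_add]
    abel

lemma iterDDerivSnocHom_apply [AddCommGroup F] (hφ : HasDiffDegreeLE (d + 1) φ)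
    (v : Fin d → V) (c : V) :
    iterDDerivSnocHom hφ v c = iterDDeriv (d + 1) (Fin.snoc v c) φ 0 :=
  rfl

/-- The symmetry `φ (-x) = ± φ x` makes the affine map `Δ^d_v φ` vanish at `-τ`,
`τ = (v₁ + ⋯ + v_d) / 2`, so it is its linear part shifted by `τ`. -/
lemma iterDDeriv_eq_iterDDerivSnocHom [Field F] [Module F V] (h2 : (2 : F) ≠ 0)
    (hφ : HasDiffDegreeLE (d + 1) φ) (hφ_neg : ∀ x, φ (-x) = (-1) ^ (d + 1) * φ x)
    (v : Fin d → V) (x : V) :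
    iterDDeriv d v φ x = iterDDerivSnocHom hφ v (x + (2⁻¹ : F) • ∑ i, v i) := by
  set ψ := iterDDeriv d v φ
  set τ := (2⁻¹ : F) • ∑ i, v i
  have hψ : HasDiffDegreeLE 1 ψ := hφ.iterDDeriv v
  have hreflect : ∀ y, ψ (-y - ∑ i, v i) = -ψ y := by
    intro y
    have h := iterDDeriv_comp_neg φ d v y
    rw [show (fun y => φ (-y)) = (-1 : F) ^ (d + 1) • φ from funext hφ_neg,
      iterDDeriv_const_smul, Pi.smul_apply, smul_eq_mul] at h
    exact mul_left_cancel₀ (pow_ne_zero d (neg_ne_zero.mpr one_ne_zero))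
      (by linear_combination -h)
  have hτ : ψ (-τ) = 0 := by
    have hS : τ + τ = ∑ i, v i := by
      rw [← add_smul, ← two_mul, mul_inv_cancel₀ h2, one_smul]
    have h := hreflect (-τ)
    rw [← hS, show -(-τ) - (τ + τ) = -τ by abel] at h
    exact (mul_eq_zero.mp (by linear_combination h : (2 : F) * ψ (-τ) = 0)).resolve_left h2
  have hτ_neg := hψ.map_add τ (-τ)
  rw [add_neg_cancel, hτ] at hτ_neg
  rw [iterDDerivSnocHom_apply, iterDDeriv_snoc]
  show ψ x = ψ (0 + (x + τ)) - ψ 0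
  rw [zero_add, hψ.map_add x τ]
  linear_combination hτ_neg

end Polarization

namespace MvPolynomial

variable {σ R : Type*}

lemma IsHomogeneous.eval_smul [CommSemiring R] {p : MvPolynomial σ R} {m : ℕ}
    (hp : p.IsHomogeneous m) (c : R) (x : σ → R) : eval (c • x) p = c ^ m * eval x p := by
  rw [eval_eq, eval_eq, Finset.mul_sum]
  refine sum_congr rfl fun s hs => ?_
  have hs : ∑ i ∈ s.support, s i = m := by
    simpa [Finsupp.weight_apply, Finsupp.sum] using hp (mem_support_iff.mp hs)
  simp only [Pi.smul_apply, smul_eq_mul, mul_pow, prod_mul_distrib, prod_pow_eq_pow_sum, hs]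
  ring

lemma hasDiffDegreeLE_eval [CommRing R] (p : MvPolynomial σ R) :
    HasDiffDegreeLE p.totalDegree (fun x : σ → R => eval x p) := by
  have : (fun x : σ → R => eval x p)
      = ∑ s ∈ p.support,
          p.coeff s • ∏ i ∈ s.support, ⇑(Pi.evalAddMonoidHom (fun _ : σ => R) i) ^ s i := by
    ext x
    simp [eval_eq, Finset.sum_apply, Finset.prod_apply]
  rw [this]
  have hcoord i := HasDiffDegreeLE.addMonoidHom (Pi.evalAddMonoidHom (fun _ : σ => R) i)
  refine HasDiffDegreeLE.sum fun s hs =>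
    ((HasDiffDegreeLE.prod fun i _ => (hcoord i).pow (s i)).const_smul _).mono ?_
  simpa [Finsupp.sum] using le_totalDegree hs

lemma IsHomogeneous.hasDiffDegreeLE_eval [CommRing R] {p : MvPolynomial σ R} {m : ℕ}
    (hp : p.IsHomogeneous m) : HasDiffDegreeLE m (fun x : σ → R => eval x p) :=
  (MvPolynomial.hasDiffDegreeLE_eval p).mono hp.totalDegree_le

lemma eval_eq_sum_range_eval_homogeneousComponent [CommRing R] {f : MvPolynomial σ R} {k : ℕ}
    (hf : f.totalDegree ≤ k) :
    (fun x : σ → R => eval x f) =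
      ∑ i ∈ range (k + 1), fun x => eval x (homogeneousComponent i f) := by
  ext x
  rw [Finset.sum_apply]
  conv_lhs => rw [← sum_homogeneousComponent f, map_sum]
  exact sum_subset (range_subset_range.2 (by omega)) fun i _ hi => by
    rw [homogeneousComponent_eq_zero i f (by simpa using hi), map_zero]

lemma iterDDeriv_eval_eq [Field R] {d : ℕ} (h2 : (2 : R) ≠ 0) {f : MvPolynomial σ R}
    (hf : f.totalDegree ≤ d + 1) (v : Fin d → σ → R) (x : σ → R) :
    iterDDeriv d v (fun x => eval x f) x =
      iterDDeriv d v (fun x => eval x (homogeneousComponent d f)) 0 +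
        iterDDerivSnocHom (homogeneousComponent_isHomogeneous (d + 1) f).hasDiffDegreeLE_eval v
          (x + (2⁻¹ : R) • ∑ i, v i) := by
  have hcomp i := (homogeneousComponent_isHomogeneous i f).hasDiffDegreeLE_eval
  rw [eval_eq_sum_range_eval_homogeneousComponent hf, iterDDeriv_sum, Finset.sum_apply,
    sum_range_succ, sum_range_succ, sum_eq_zero fun i hi =>
      congrFun ((hcomp i).iterDDeriv_eq_zero (mem_range.1 hi) v) x, zero_add,
    ((hcomp d).iterDDeriv (j := 0) v).apply_eq_apply_zero x]
  congr 1
  refine iterDDeriv_eq_iterDDerivSnocHom h2 _ (fun y => ?_) v x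
  rw [← (homogeneousComponent_isHomogeneous (d + 1) f).eval_smul, neg_one_smul]

end MvPolynomial

section Bias

variable {F α β : Type*} [AddGroup F] [Fintype α] [Fintype β] (χ : AddChar F ℂ)

lemma bias_comp_equiv (e : α ≃ β) (φ : β → F) : bias χ (φ ∘ e) = bias χ φ := by
  unfold bias cbias
  rw [Fintype.card_congr e, Fintype.sum_equiv e]
  exact fun _ => rfl

lemma bias_prod_le (φ : β × α → F) :
    bias χ φ ≤ (Fintype.card β : ℝ)⁻¹ * ∑ b, bias χ (fun a => φ (b, a)) := by
  unfold bias cbias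
  rw [Fintype.card_prod, Fintype.sum_prod_type, Nat.cast_mul, mul_inv, mul_assoc, mul_sum,
    norm_mul, norm_inv, Complex.norm_natCast]
  gcongr
  exact norm_sum_le _ _

lemma exists_sum_addChar_comp_eq_ofReal [AddGroup β] (ψ : β →+ F) :
    ∃ r : ℝ, 0 ≤ r ∧ ∑ b, χ (ψ b) = r := by
  classical
  have h := AddChar.sum_eq_ite (χ.compAddMonoidHom ψ)
  split_ifs at h
  · exact ⟨Fintype.card β, by positivity, by simpa using h⟩
  · exact ⟨0, le_rfl, by simpa using h⟩

lemma norm_sum_mul_ofReal_le {z : α → ℂ} {r : α → ℝ} (hz : ∀ a, ‖z a‖ ≤ 1) (hr : ∀ a, 0 ≤ r a) :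
    ‖∑ a, z a * r a‖ ≤ ‖∑ a, (r a : ℂ)‖ :=
  calc ‖∑ a, z a * r a‖ ≤ ∑ a, r a := (norm_sum_le _ _).trans <| sum_le_sum fun a _ => by
        rw [norm_mul, Complex.norm_real, Real.norm_of_nonneg (hr a)]
        exact mul_le_of_le_one_left (hr a) (hz a)
    _ = ‖∑ a, (r a : ℂ)‖ := by
        rw [← Complex.ofReal_sum, Complex.norm_real,
          Real.norm_of_nonneg (sum_nonneg fun a _ => hr a)]

/-- Each fibre sum `∑ b, χ (L a b)` is a nonnegative real (a character sum over a group), so the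
phases `χ (H a)` can only decrease the bias. -/
lemma bias_add_addMonoidHom_le [Finite F] [AddGroup β] (H : α → F) (L : α → β →+ F) :
    bias χ (fun p : β × α => H p.2 + L p.2 p.1) ≤ bias χ (fun p : β × α => L p.2 p.1) := by
  choose r hr0 hr using fun a => exists_sum_addChar_comp_eq_ofReal χ (L a)
  unfold bias cbias
  rw [norm_mul, norm_mul]
  gcongr
  simp only [Fintype.sum_prod_type_right, AddChar.map_add_eq_mul, ← mul_sum, hr]
  exact norm_sum_mul_ofReal_le (fun a => (AddChar.norm_apply χ _).le) hr0

lemma bias_add_addMonoidHom_shift_le [AddCommGroup β] (H : α → F) (L : α → β →+ F) (τ : α → β) :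
    bias χ (fun p : β × α => H p.2 + L p.2 (p.1 + τ p.2)) ≤
      (Fintype.card β : ℝ)⁻¹ * ∑ c, bias χ (fun a => H a - L a c) := by
  have hinv : Function.Involutive fun p : β × α => (-p.1 - τ p.2, p.2) := fun p => by simp
  rw [← bias_comp_equiv χ hinv.toPerm]
  convert bias_prod_le χ _ using 4 with c a
  simp [sub_eq_add_neg]

end Bias

theorem stmt17_general {F : Type*} [Field F] [Fintype F] (hchar : ringChar F ≠ 2) {n d : ℕ}
    (χ : AddChar F ℂ)
    (f : MvPolynomial (Fin n) F) (hdeg : f.totalDegree ≤ d + 1) :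
    biasDD χ d (fun x => eval x f) ≤
        bias χ (fun v : Fin (d + 1) → (Fin n → F) =>
          iterDDeriv (d + 1) v (fun x => eval x (homogeneousComponent (d + 1) f)) 0)
      ∧
    biasDD χ d (fun x => eval x f) ≤
        (Fintype.card (Fin n → F) : ℝ)⁻¹ * ∑ c : Fin n → F,
          bias χ (fun v : Fin d → (Fin n → F) =>
            iterDDeriv d v (fun x => eval x (homogeneousComponent d f)) 0
              - iterDDeriv (d + 1) (Fin.snoc v c)
                  (fun x => eval x (homogeneousComponent (d + 1) f)) 0) := by
  set H := fun v : Fin d → Fin n → F =>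
    iterDDeriv d v (fun x => eval x (homogeneousComponent d f)) 0
  set L := iterDDerivSnocHom (homogeneousComponent_isHomogeneous (d + 1) f).hasDiffDegreeLE_eval
  set τ := fun v : Fin d → Fin n → F => (2⁻¹ : F) • ∑ i, v i
  have hbiasDD : biasDD χ d (fun x => eval x f) =
      bias χ (fun p : (Fin n → F) × (Fin d → Fin n → F) => H p.2 + L p.2 (p.1 + τ p.2)) := by
    unfold biasDD
    congr 1
    ext p
    exact iterDDeriv_eval_eq (Ring.two_ne_zero hchar) hdeg p.2 p.1
  refine ⟨?_, hbiasDD ▸ bias_add_addMonoidHom_shift_le χ H L τ⟩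
  calc biasDD χ d (fun x => eval x f)
      = bias χ (fun p : (Fin n → F) × (Fin d → Fin n → F) =>
          (H p.2 + L p.2 (τ p.2)) + L p.2 p.1) := by
        rw [hbiasDD]
        congr 1
        ext p
        rw [map_add]
        abel
    _ ≤ bias χ (fun p : (Fin n → F) × (Fin d → Fin n → F) => L p.2 p.1) :=
        bias_add_addMonoidHom_le χ (fun v => H v + L v (τ v)) L
    _ = _ := by
        rw [← bias_comp_equiv χ (Fin.snocEquiv fun _ => Fin n → F)]
        rfl

theorem stmt17 {F : Type*} [Field F] [Fintype F] (hchar : ringChar F ≠ 2) {n d : ℕ}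
    (hd : 1 ≤ d) (χ : AddChar F ℂ) (hχ : χ ≠ 1)
    (f : MvPolynomial (Fin n) F) (hdeg : f.totalDegree ≤ d + 1) :
    biasDD χ d (fun x => eval x f) ≤
        bias χ (fun v : Fin (d + 1) → (Fin n → F) =>
          iterDDeriv (d + 1) v (fun x => eval x (homogeneousComponent (d + 1) f)) 0)
      ∧
    biasDD χ d (fun x => eval x f) ≤
        (Fintype.card (Fin n → F) : ℝ)⁻¹ * ∑ c : Fin n → F,
          bias χ (fun v : Fin d → (Fin n → F) =>
            iterDDeriv d v (fun x => eval x (homogeneousComponent d f)) 0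
              - iterDDeriv (d + 1) (Fin.snoc v c)
                  (fun x => eval x (homogeneousComponent (d + 1) f)) 0) :=
  stmt17_general hchar χ f hdeg
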